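/- arXiv:math/0301361 — 2 statements merged into one kernel-verified Lean document; each statement's English description precedes it below -/
import Mathlib

section
/- The bilinear form ψ̃(f∂, g∂) = q^{-1} ∫ (∂³ τ^{-3} f) g is antisymmetric: ψ̃(f∂, g∂) = −ψ̃(g∂, f∂) for all Laurent polynomials f, g. -/
open Finsupp

noncomputable section

/-- Laurent polynomials as finitely supported coefficient functions. -/
abbrev LP := ℤ →₀ ℝ

/-- q-number [m] = (q^m - q^{-m})/(q - q⁻¹). -/
def qn (q : ℝ) (m : ℤ) : ℝ := (q ^ m - q ^ (-m)) / (q - q⁻¹)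

/-- Multiplication of Laurent polynomials. -/
def lmul (f g : LP) : LP := f.sum fun n a => g.sum fun m b => Finsupp.single (n + m) (a * b)

/-- (τ f)(z) = f (q z). -/
def tau (q : ℝ) (f : LP) : LP := f.sum fun n a => Finsupp.single n (q ^ n * a)

/-- τ⁻¹. -/
def tauInv (q : ℝ) (f : LP) : LP := tau q⁻¹ f

/-- ∂_q f (z) = (f(qz) - f(q⁻¹z)) / ((q - q⁻¹) z), i.e. ∂_q z^n = [n] z^{n-1}. -/
def dq (q : ℝ) (f : LP) : LP := f.sum fun n a => Finsupp.single (n - 1) (qn q n * a)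

/-- ∂ = ∂_q τ, so ∂ z^m = q^m [m] z^{m-1}. -/
def dd (q : ℝ) (f : LP) : LP := dq q (tau q f)

/-- ∂̂ = ∂_q τ⁻¹. -/
def dhat (q : ℝ) (f : LP) : LP := dq q (tauInv q f)

/-- Residue: coefficient of z⁻¹. -/
def intg (f : LP) : ℝ := f (-1)


/-- ψ̃(f∂, g∂) = q⁻¹ ∫ (∂³ τ⁻³ f) g. -/
def psiT (q : ℝ) (f g : LP) : ℝ :=
  q⁻¹ * intg (lmul (dd q (dd q (dd q (tauInv q (tauInv q (tauInv q f)))))) g)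

/-! On monomials `∂³ τ⁻³ zⁿ = q⁻³ [n][n-1][n-2] zⁿ⁻³`, so
`ψ̃(f∂, g∂) = q⁻⁴ ∑ₙ [n][n-1][n-2] fₙ g₂₋ₙ`. Since `[-k] = -[k]`, the weight `[n][n-1][n-2]`
changes sign under `n ↦ 2 - n`, and this substitution exchanges the roles of `f` and `g`. -/

section

variable (q : ℝ)

lemma tau_apply (f : LP) (k : ℤ) : tau q f k = q ^ k * f k := by
  rw [tau, Finsupp.sum_apply, Finsupp.sum_eq_single k]
  · exact single_eq_same
  · intro n _ hn; exact single_eq_of_ne hn.symm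
  · intro _; simp

lemma tauInv_apply (f : LP) (k : ℤ) : tauInv q f k = q ^ (-k) * f k := by
  rw [tauInv, tau_apply, inv_zpow']

lemma dq_apply (f : LP) (k : ℤ) : dq q f k = qn q (k + 1) * f (k + 1) := by
  rw [dq, Finsupp.sum_apply, Finsupp.sum_eq_single (k + 1)]
  · rw [add_sub_cancel_right, single_eq_same]
  · intro n _ hn; exact single_eq_of_ne (by omega)
  · intro _; simp

lemma dd_apply (f : LP) (k : ℤ) : dd q f k = q ^ (k + 1) * qn q (k + 1) * f (k + 1) := by
  rw [dd, dq_apply, tau_apply]; ring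

lemma intg_lmul (f g : LP) : intg (lmul f g) = ∑ᶠ n, f n * g (-1 - n) := by
  rw [finsum_eq_finsetSum_of_support_subset _ (s := f.support) ?_]
  · rw [intg, lmul, Finsupp.sum_apply]
    refine Finset.sum_congr rfl fun n _ => ?_
    dsimp only
    rw [Finsupp.sum_apply, Finsupp.sum_eq_single (-1 - n)]
    · rw [add_sub_cancel, single_eq_same]
    · intro m _ hm; exact single_eq_of_ne (by omega)
    · intro _; simp
  · intro n hn
    simp only [Function.mem_support, ne_eq, Finset.mem_coe, Finsupp.mem_support_iff] at hn ⊢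
    exact left_ne_zero_of_mul hn

lemma qn_neg (k : ℤ) : qn q (-k) = - qn q k := by
  rw [qn, qn, neg_neg, ← neg_div, neg_sub]

def qnDesc3 (n : ℤ) : ℝ := qn q n * qn q (n - 1) * qn q (n - 2)

lemma qnDesc3_two_sub (n : ℤ) : qnDesc3 q (2 - n) = - qnDesc3 q n := by
  rw [qnDesc3, qnDesc3, show 2 - n = -(n - 2) by ring, show -(n - 2) - 1 = -(n - 1) by ring,
    show -(n - 2) - 2 = -n by ring, qn_neg, qn_neg, qn_neg]
  ring

lemma dd_cube_tauInv_cube_apply (hq : q ≠ 0) (f : LP) (k : ℤ) :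
    dd q (dd q (dd q (tauInv q (tauInv q (tauInv q f))))) k =
      q ^ (-3 : ℤ) * qnDesc3 q (k + 3) * f (k + 3) := by
  simp only [dd_apply, tauInv_apply]
  rw [qnDesc3, show k + 1 + 1 = k + 2 by ring, show k + 2 + 1 = k + 3 by ring,
    show k + 3 - 1 = k + 2 by ring, show k + 3 - 2 = k + 1 by ring]
  simp only [zpow_neg, zpow_add₀ hq]
  field_simp

lemma psiT_eq_finsum (hq : q ≠ 0) (f g : LP) :
    psiT q f g = q ^ (-4 : ℤ) * ∑ᶠ n, qnDesc3 q n * f n * g (2 - n) := by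
  rw [psiT, intg_lmul, mul_finsum, mul_finsum]
  conv_rhs => rw [← finsum_comp_equiv (Equiv.addRight 3)]
  refine finsum_congr fun n => ?_
  rw [dd_cube_tauInv_cube_apply q hq, Equiv.coe_addRight, show 2 - (n + 3) = -1 - n by ring,
    show (-4 : ℤ) = -1 + -3 by rfl, zpow_add₀ hq, zpow_neg_one]
  ring

end

theorem stmt10_general (q : ℝ) (hq0 : q ≠ 0) (f g : LP) :
    psiT q f g = - psiT q g f := by
  rw [psiT_eq_finsum q hq0, psiT_eq_finsum q hq0, ← mul_neg, ← finsum_neg_distrib,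
    ← finsum_comp_equiv (Equiv.subLeft 2)]
  refine congrArg _ (finsum_congr fun n => ?_)
  rw [Equiv.subLeft_apply, qnDesc3_two_sub, sub_sub_cancel]
  ring

theorem stmt10 (q : ℝ) (hq0 : q ≠ 0) (hq1 : q ≠ 1) (hqm1 : q ≠ -1) (f g : LP) :
    psiT q f g = - psiT q g f :=
  stmt10_general q hq0 f g
end
end

section
/- On generators ℓ_n = z^{n+1}∂, the central form ψ̃ satisfies ψ̃(ℓ_n, ℓ_m) = q^{-4} [n+1][n][n−1] δ_{m+n,0}. -/
open Finsupp

noncomputable section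

lemma tau_single (q : ℝ) (k : ℤ) (a : ℝ) :
    tau q (single k a) = single k (q ^ k * a) :=
  sum_single_index (by rw [mul_zero, single_zero])

lemma tauInv_single (q : ℝ) (k : ℤ) (a : ℝ) :
    tauInv q (single k a) = single k (q ^ (-k) * a) := by
  rw [tauInv, tau_single, inv_zpow, zpow_neg]

lemma dq_single (q : ℝ) (k : ℤ) (a : ℝ) :
    dq q (single k a) = single (k - 1) (qn q k * a) :=
  sum_single_index (by rw [mul_zero, single_zero])

lemma dd_single (q : ℝ) (k : ℤ) (a : ℝ) :
    dd q (single k a) = single (k - 1) (q ^ k * qn q k * a) := by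
  rw [dd, tau_single, dq_single, mul_left_comm, mul_assoc]

lemma lmul_single_single (k l : ℤ) (a b : ℝ) :
    lmul (single k a) (single l b) = single (k + l) (a * b) := by
  rw [lmul, sum_single_index (by simp),
    sum_single_index (by rw [mul_zero, single_zero])]

lemma intg_single (k : ℤ) (a : ℝ) : intg (single k a) = if k = -1 then a else 0 :=
  single_apply

lemma dd_dd_dd_tauInv_tauInv_tauInv_single {q : ℝ} (hq : q ≠ 0) (k : ℤ) (a : ℝ) :
    dd q (dd q (dd q (tauInv q (tauInv q (tauInv q (single k a)))))) =
      single (k - 3) (q ^ (-3 : ℤ) * (qn q k * qn q (k - 1) * qn q (k - 2)) * a) := by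
  simp only [tauInv_single, dd_single]
  have hpow : q ^ (k - 2) * q ^ (k - 1) * q ^ k * (q ^ (-k) * (q ^ (-k) * q ^ (-k)))
      = q ^ (-3 : ℤ) := by
    simp only [← zpow_add₀ hq]
    ring_nf
  rw [show k - 1 - 1 - 1 = k - 3 by ring, show k - 1 - 1 = k - 2 by ring, ← hpow]
  congr 1
  ring

lemma psiT_single_single {q : ℝ} (hq : q ≠ 0) (k l : ℤ) (a b : ℝ) :
    psiT q (single k a) (single l b) =
      q ^ (-4 : ℤ) * (qn q k * qn q (k - 1) * qn q (k - 2)) * (a * b)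
        * (if k + l = 2 then 1 else 0) := by
  have hdeg : k - 3 + l = -1 ↔ k + l = 2 := by omega
  rw [psiT, dd_dd_dd_tauInv_tauInv_tauInv_single hq, lmul_single_single, intg_single,
    if_congr hdeg rfl rfl, show (-4 : ℤ) = -1 + -3 by norm_num, zpow_add₀ hq, zpow_neg_one]
  split_ifs <;> ring

theorem stmt12_general (q : ℝ) (hq0 : q ≠ 0) (n m : ℤ) :
    psiT q (Finsupp.single (n + 1) (1 : ℝ)) (Finsupp.single (m + 1) (1 : ℝ))
      = q ^ (-4 : ℤ) * (qn q (n + 1) * qn q n * qn q (n - 1))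
        * (if m + n = 0 then 1 else 0) := by
  rw [psiT_single_single hq0, show n + 1 - 1 = n by ring, show n + 1 - 2 = n - 1 by ring,
    if_congr (show n + 1 + (m + 1) = 2 ↔ m + n = 0 by omega) rfl rfl, mul_one, mul_one]

theorem stmt12 (q : ℝ) (hq0 : q ≠ 0) (hq1 : q ≠ 1) (hqm1 : q ≠ -1) (n m : ℤ) :
    psiT q (Finsupp.single (n + 1) (1 : ℝ)) (Finsupp.single (m + 1) (1 : ℝ))
      = q ^ (-4 : ℤ) * (qn q (n + 1) * qn q n * qn q (n - 1))
        * (if m + n = 0 then 1 else 0) :=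
  stmt12_general q hq0 n m
end
end
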